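/- arXiv:2505.14587 — 3 statements merged into one kernel-verified Lean document; each statement's English description precedes it below -/
import Mathlib

section
/- Let λ > 0 and for c₀ ∈ (0,1) define δ(c₀) = (√((1+λ−c₀)² + 4λc₀) − (1+λ−c₀)) / (2λ). Then δ is strictly increasing on (0,1): for all 0 < c₀ < c₀' < 1, δ(c₀) < δ(c₀'). -/
/-!
With `s = c₀ + λ - 1` the radicand is `s² + 4λ` and `2λ δ(c₀) = √(s² + 4λ) + s - 2λ`.
For `a > 0`, `x = √(s² + a) + s` is the positive root of `x - a / x = 2s`; since
`x ↦ x - a / x` is strictly increasing on `(0, ∞)`, so is its inverse `s ↦ √(s² + a) + s`.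
Hence `δ` is strictly increasing on all of `ℝ`.
-/

open Real

lemma strictMonoOn_sub_div {a : ℝ} (ha : 0 < a) :
    StrictMonoOn (fun x : ℝ => x - a / x) (Set.Ioi 0) := by
  intro x hx y hy hxy
  have : a / y < a / x := div_lt_div_of_pos_left ha hx hxy
  simp only
  linarith

lemma sqrt_sq_add_add_pos {a : ℝ} (ha : 0 < a) (s : ℝ) : 0 < √(s ^ 2 + a) + s := by
  have : |s| < √(s ^ 2 + a) := (Real.lt_sqrt (abs_nonneg s)).2 (by rw [sq_abs]; linarith)
  linarith [neg_abs_le s]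

lemma sqrt_sq_add_add_sub_div {a : ℝ} (ha : 0 < a) (s : ℝ) :
    (√(s ^ 2 + a) + s) - a / (√(s ^ 2 + a) + s) = 2 * s := by
  have hpos := sqrt_sq_add_add_pos ha s
  have hsq : √(s ^ 2 + a) ^ 2 = s ^ 2 + a := Real.sq_sqrt (by positivity)
  field_simp
  linear_combination hsq

lemma strictMono_sqrt_sq_add_add {a : ℝ} (ha : 0 < a) :
    StrictMono fun s : ℝ => √(s ^ 2 + a) + s := by
  intro s t hst
  by_contra! hle
  have := (strictMonoOn_sub_div ha).monotoneOn (sqrt_sq_add_add_pos ha t)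
    (sqrt_sq_add_add_pos ha s) hle
  simp only [sqrt_sq_add_add_sub_div ha] at this
  linarith

/-- For fixed `λ > 0`, the correction term
`δ(c₀) = (√((1+λ−c₀)² + 4λc₀) − (1+λ−c₀))/(2λ)` is strictly increasing in `c₀` on `(0,1)`. -/
theorem delta_strictMono_in_c0
    (lam : ℝ) (hlam : 0 < lam)
    (δ : ℝ → ℝ)
    (hδ : ∀ c₀, δ c₀ =
      (Real.sqrt ((1 + lam - c₀) ^ 2 + 4 * lam * c₀) - (1 + lam - c₀)) / (2 * lam)) :
    StrictMonoOn δ (Set.Ioo (0 : ℝ) 1) := by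
  have hδ' : δ = fun c₀ =>
      ((√((c₀ + lam - 1) ^ 2 + 4 * lam) + (c₀ + lam - 1)) - 2 * lam) / (2 * lam) := by
    funext c₀
    rw [hδ]
    ring_nf
  have hmono : StrictMono δ := by
    rw [hδ']
    intro c c' hcc
    have := strictMono_sqrt_sq_add_add (by positivity : 0 < 4 * lam)
      (by linarith : c + lam - 1 < c' + lam - 1)
    simp only at this ⊢
    gcongr
  exact hmono.strictMonoOn _
end

section
/- Let c₀ ∈ (0,1) and for λ > 0 define δ(λ) = (√((1+λ−c₀)² + 4λc₀) − (1+λ−c₀)) / (2λ). Then (i) δ is strictly decreasing on (0,∞), and (ii) the function λ ↦ λ·(1 + δ(λ)) is strictly increasing on (0,∞). -/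
/-!
Write `s(λ) = √((1+λ−c₀)² + 4λc₀)`, which is increasing in `λ`. Since
`s² − (1+λ−c₀)² = 4λc₀`, rationalising gives `δ(λ) = 2c₀ / (s(λ) + 1 + λ − c₀)`, a positive
constant over an increasing positive denominator, while `λ(1 + δ(λ)) = (s(λ) + λ + c₀ − 1)/2`
is visibly increasing.
-/

open Set

noncomputable def sqrtDisc (c lam : ℝ) : ℝ :=
  Real.sqrt ((1 + lam - c) ^ 2 + 4 * lam * c)

section

variable {c lam : ℝ}

lemma sq_sqrtDisc (hc : 0 ≤ c) (hlam : 0 ≤ lam) :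
    sqrtDisc c lam ^ 2 = (1 + lam - c) ^ 2 + 4 * lam * c :=
  Real.sq_sqrt (by positivity)

lemma sqrtDisc_strictMonoOn (hc : 0 ≤ c) : StrictMonoOn (sqrtDisc c) (Ioi 0) := by
  intro a ha b _ hab
  have ha : 0 < a := ha
  exact Real.sqrt_lt_sqrt (by positivity) (by nlinarith)

lemma abs_lt_sqrtDisc (hc : 0 < c) (hlam : 0 < lam) : |1 + lam - c| < sqrtDisc c lam := by
  rw [← Real.sqrt_sq_eq_abs]
  exact Real.sqrt_lt_sqrt (sq_nonneg _) (by nlinarith)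

lemma sqrtDisc_add_pos (hc : 0 < c) (hlam : 0 < lam) : 0 < sqrtDisc c lam + (1 + lam - c) := by
  linarith [neg_abs_le (1 + lam - c), abs_lt_sqrtDisc hc hlam]

lemma sqrtDisc_sub_div_eq (hc : 0 < c) (hlam : 0 < lam) :
    (sqrtDisc c lam - (1 + lam - c)) / (2 * lam) = 2 * c / (sqrtDisc c lam + (1 + lam - c)) := by
  rw [div_eq_div_iff (by positivity) (sqrtDisc_add_pos hc hlam).ne']
  linear_combination sq_sqrtDisc hc.le hlam.le

lemma mul_one_add_sqrtDisc_sub_div_eq (hlam : lam ≠ 0) :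
    lam * (1 + (sqrtDisc c lam - (1 + lam - c)) / (2 * lam)) = (sqrtDisc c lam + lam + c - 1) / 2 := by
  field_simp
  ring

end

/-- For fixed `c₀ ∈ (0,1)`, the map `λ ↦ δ(λ)` is strictly decreasing on `(0,∞)`, and
`λ ↦ λ·(1 + δ(λ))` is strictly increasing on `(0,∞)`, where
`δ(λ) = (√((1+λ−c₀)² + 4λc₀) − (1+λ−c₀))/(2λ)`. -/
theorem delta_strictAnti_in_lambda_and_lambda_one_add_delta_strictMono
    (c₀ : ℝ) (hc₀ : c₀ ∈ Set.Ioo (0 : ℝ) 1)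
    (δ : ℝ → ℝ)
    (hδ : ∀ lam, δ lam =
      (Real.sqrt ((1 + lam - c₀) ^ 2 + 4 * lam * c₀) - (1 + lam - c₀)) / (2 * lam)) :
    StrictAntiOn δ (Set.Ioi (0 : ℝ)) ∧
      StrictMonoOn (fun lam => lam * (1 + δ lam)) (Set.Ioi (0 : ℝ)) := by
  have hc : 0 < c₀ := hc₀.1
  obtain rfl : δ = fun lam => (sqrtDisc c₀ lam - (1 + lam - c₀)) / (2 * lam) := funext hδ
  constructor
  · intro a ha b hb hab
    simp only [sqrtDisc_sub_div_eq hc ha, sqrtDisc_sub_div_eq hc hb]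
    exact div_lt_div_of_pos_left (by positivity) (sqrtDisc_add_pos hc ha)
      (by linarith [sqrtDisc_strictMonoOn hc.le ha hb hab])
  · intro a ha b hb hab
    have ha : 0 < a := ha
    have hb : 0 < b := hb
    simp only [mul_one_add_sqrtDisc_sub_div_eq ha.ne', mul_one_add_sqrtDisc_sub_div_eq hb.ne']
    linarith [sqrtDisc_strictMonoOn hc.le ha hb hab]
end

section
/- Let d, n be positive integers, λ > 0, let C₁, C₂ ∈ ℝ^{d×d} be symmetric positive semidefinite matrices, and let c₁, c₂ > 0 with c₁ + c₂ = 1. Then there exists a pair (δ₁, δ₂) with 0 ≤ δ_ℓ ≤ tr(C_ℓ)/(nλ) for ℓ = 1, 2 satisfying the coupled fixed-point equations δ_ℓ = (1/n)·tr( C_ℓ · ( c₁·C₁/(1+δ₁) + c₂·C₂/(1+δ₂) + λ I_d )^{-1} ) for ℓ = 1, 2; the inverse exists because the matrix being inverted is positive definite. -/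
/-!
Write `Q(δ) = ∑ ℓ, c ℓ / (1 + δ ℓ) • C ℓ + λ • 1` and `F(δ) ℓ = (1/n) tr (C ℓ Q(δ)⁻¹)`.
On `δ ≥ 0`, `Q` is antitone for the Loewner order, inversion is antitone on positive definite
matrices and `X ↦ tr (C X)` is monotone for `C ⪰ 0`, so `F` is monotone. Since `Q(δ) ⪰ λ • 1`,
`F` maps the box `∏ ℓ, [0, tr (C ℓ) / (n λ)]` into itself, and the Knaster–Tarski theorem on
this complete lattice yields a fixed point.
-/

open Matrix
open scoped MatrixOrder ComplexOrder

theorem MonotoneOn.exists_fixedPoint_Icc {α : Type*} [ConditionallyCompleteLattice α]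
    {f : α → α} {a b : α} (hab : a ≤ b) (hmaps : Set.MapsTo f (Set.Icc a b) (Set.Icc a b))
    (hmono : MonotoneOn f (Set.Icc a b)) : ∃ x ∈ Set.Icc a b, f x = x := by
  have : Fact (a ≤ b) := ⟨hab⟩
  let g : Set.Icc a b →o Set.Icc a b := ⟨hmaps.restrict f _ _, fun x y h ↦ hmono x.2 y.2 h⟩
  exact ⟨g.lfp, g.lfp.2, congrArg Subtype.val g.map_lfp⟩

namespace Matrix

variable {𝕜 m : Type*} [RCLike 𝕜]

lemma PosDef.of_le {A B : Matrix m m 𝕜} (hA : A.PosDef) (hAB : A ≤ B) : B.PosDef := by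
  simpa using hA.add_posSemidef hAB

variable [Fintype m] [DecidableEq m]

/-- Both `A⁻¹ - B⁻¹` and `B - A` are Schur complements in the block matrix
`[[B, 1], [1, A⁻¹]]`. -/
lemma PosDef.inv_anti {A B : Matrix m m 𝕜} (hA : A.PosDef) (hAB : A ≤ B) : B⁻¹ ≤ A⁻¹ := by
  have hB := hA.of_le hAB
  let := hA.isUnit.invertible
  let := hB.isUnit.invertible
  let := hA.inv.isUnit.invertible
  have h := (PosDef.fromBlocks₂₂ B 1 hA.inv).mpr (by simpa [le_iff] using hAB)
  simpa [le_iff] using (PosDef.fromBlocks₁₁ 1 A⁻¹ hB).mp h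

lemma PosSemidef.trace_mul_nonneg {C X : Matrix m m 𝕜} (hC : C.PosSemidef) (hX : X.PosSemidef) :
    0 ≤ (C * X).trace := by
  obtain ⟨B, rfl⟩ := CStarAlgebra.nonneg_iff_eq_star_mul_self.mp hX.nonneg
  rw [← Matrix.mul_assoc, trace_mul_comm, ← Matrix.mul_assoc]
  exact (hC.mul_mul_conjTranspose_same B).trace_nonneg

lemma PosSemidef.trace_mul_mono {C X Y : Matrix m m 𝕜} (hC : C.PosSemidef) (hXY : X ≤ Y) :
    (C * X).trace ≤ (C * Y).trace := by
  simpa [Matrix.mul_sub, trace_sub] using hC.trace_mul_nonneg hXY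

lemma trace_mul_inv_le_of_smul_one_le {C A : Matrix m m ℝ} {lam : ℝ} (hC : C.PosSemidef)
    (hlam : 0 < lam) (hA : lam • 1 ≤ A) :
    (C * A⁻¹).trace ≤ C.trace / lam := by
  have h := hC.trace_mul_mono ((PosDef.one.smul hlam).inv_anti hA)
  have hinv : (lam • (1 : Matrix m m ℝ))⁻¹ = lam⁻¹ • 1 :=
    inv_eq_left_inv (by simp [smul_smul, hlam.ne'])
  rwa [hinv, Matrix.mul_smul, Matrix.mul_one, trace_smul, smul_eq_mul,
    ← div_eq_inv_mul] at h

end Matrix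

section CoupledFixedPoint

variable {ι m : Type*} [Fintype ι] [DecidableEq m]

/-- The matrix `Q̄⁻¹` of the deterministic equivalent, as a function of the corrections `δ`. -/
noncomputable def correctedCovariance (C : ι → Matrix m m ℝ) (c : ι → ℝ) (lam : ℝ)
    (δ : ι → ℝ) : Matrix m m ℝ :=
  ∑ ℓ, (c ℓ / (1 + δ ℓ)) • C ℓ + lam • 1

variable {C : ι → Matrix m m ℝ} {c : ι → ℝ} {lam : ℝ}

lemma smul_one_le_correctedCovariance (hC : ∀ ℓ, (C ℓ).PosSemidef) (hc : 0 ≤ c) {δ : ι → ℝ}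
    (hδ : 0 ≤ δ) : lam • 1 ≤ correctedCovariance C c lam δ := by
  rw [le_iff, correctedCovariance, add_sub_cancel_right]
  refine posSemidef_sum _ fun ℓ _ ↦ (hC ℓ).smul ?_
  have : 0 ≤ δ ℓ := hδ ℓ
  exact div_nonneg (hc ℓ) (by linarith)

lemma correctedCovariance_posDef (hC : ∀ ℓ, (C ℓ).PosSemidef) (hc : 0 ≤ c) (hlam : 0 < lam)
    {δ : ι → ℝ} (hδ : 0 ≤ δ) : (correctedCovariance C c lam δ).PosDef :=
  (PosDef.one.smul hlam).of_le (smul_one_le_correctedCovariance hC hc hδ)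

lemma correctedCovariance_antitoneOn (hC : ∀ ℓ, (C ℓ).PosSemidef) (hc : 0 ≤ c) :
    AntitoneOn (correctedCovariance C c lam) (Set.Ici 0) := by
  intro δ hδ δ' _ hδδ'
  rw [le_iff, correctedCovariance, correctedCovariance, add_sub_add_right_eq_sub,
    ← Finset.sum_sub_distrib]
  refine posSemidef_sum _ fun ℓ _ ↦ ?_
  rw [← sub_smul]
  refine (hC ℓ).smul (sub_nonneg.mpr ?_)
  have : 0 ≤ δ ℓ := hδ ℓ
  exact div_le_div_of_nonneg_left (hc ℓ) (by linarith) (by linarith [hδδ' ℓ])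

variable [Fintype m]

noncomputable def correctionMap (C : ι → Matrix m m ℝ) (c : ι → ℝ) (lam n : ℝ) (δ : ι → ℝ) :
    ι → ℝ :=
  fun ℓ ↦ 1 / n * (C ℓ * (correctedCovariance C c lam δ)⁻¹).trace

lemma correctionMap_mapsTo (hC : ∀ ℓ, (C ℓ).PosSemidef) (hc : 0 ≤ c) (hlam : 0 < lam)
    {n : ℝ} (hn : 0 ≤ n) :
    Set.MapsTo (correctionMap C c lam n) (Set.Icc 0 fun ℓ ↦ (C ℓ).trace / (n * lam))
      (Set.Icc 0 fun ℓ ↦ (C ℓ).trace / (n * lam)) := by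
  intro δ hδ
  have hQ := correctedCovariance_posDef hC hc hlam hδ.1
  refine ⟨fun ℓ ↦ ?_, fun ℓ ↦ ?_⟩
  · exact mul_nonneg (by positivity) ((hC ℓ).trace_mul_nonneg hQ.inv.posSemidef)
  · calc 1 / n * (C ℓ * (correctedCovariance C c lam δ)⁻¹).trace
        ≤ 1 / n * ((C ℓ).trace / lam) := by
          gcongr
          exact trace_mul_inv_le_of_smul_one_le (hC ℓ) hlam
            (smul_one_le_correctedCovariance hC hc hδ.1)
      _ = (C ℓ).trace / (n * lam) := by rw [div_mul_div_comm, one_mul]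

lemma correctionMap_monotoneOn (hC : ∀ ℓ, (C ℓ).PosSemidef) (hc : 0 ≤ c) (hlam : 0 < lam)
    {n : ℝ} (hn : 0 ≤ n) : MonotoneOn (correctionMap C c lam n) (Set.Ici 0) := by
  intro δ hδ δ' hδ' hδδ' ℓ
  have hQ := correctedCovariance_posDef hC hc hlam hδ'
  have := (hC ℓ).trace_mul_mono (hQ.inv_anti (correctedCovariance_antitoneOn hC hc hδ hδ' hδδ'))
  exact mul_le_mul_of_nonneg_left this (by positivity)

theorem exists_fixedPoint_correctionMap (hC : ∀ ℓ, (C ℓ).PosSemidef) (hc : 0 ≤ c)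
    (hlam : 0 < lam) {n : ℝ} (hn : 0 ≤ n) :
    ∃ δ ∈ Set.Icc 0 (fun ℓ ↦ (C ℓ).trace / (n * lam)), correctionMap C c lam n δ = δ :=
  MonotoneOn.exists_fixedPoint_Icc
    (fun ℓ ↦ div_nonneg (hC ℓ).trace_nonneg (by positivity))
    (correctionMap_mapsTo hC hc hlam hn)
    ((correctionMap_monotoneOn hC hc hlam hn).mono fun _ h ↦ h.1)

end CoupledFixedPoint

theorem coupled_fixed_point_exists_general
    (d n : ℕ)
    (lam : ℝ) (hlam : 0 < lam)
    (C₁ C₂ : Matrix (Fin d) (Fin d) ℝ)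
    (hC₁ : C₁.PosSemidef) (hC₂ : C₂.PosSemidef)
    (c₁ c₂ : ℝ) (hc₁ : 0 < c₁) (hc₂ : 0 < c₂) :
    ∃ δ₁ δ₂ : ℝ,
      (0 ≤ δ₁ ∧ δ₁ ≤ C₁.trace / (n * lam)) ∧
      (0 ≤ δ₂ ∧ δ₂ ≤ C₂.trace / (n * lam)) ∧
      ((c₁ / (1 + δ₁)) • C₁ + (c₂ / (1 + δ₂)) • C₂
        + lam • (1 : Matrix (Fin d) (Fin d) ℝ)).PosDef ∧
      δ₁ = (1 / (n : ℝ)) * (C₁ * ((c₁ / (1 + δ₁)) • C₁ + (c₂ / (1 + δ₂)) • C₂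
        + lam • (1 : Matrix (Fin d) (Fin d) ℝ))⁻¹).trace ∧
      δ₂ = (1 / (n : ℝ)) * (C₂ * ((c₁ / (1 + δ₁)) • C₁ + (c₂ / (1 + δ₂)) • C₂
        + lam • (1 : Matrix (Fin d) (Fin d) ℝ))⁻¹).trace := by
  have hC : ∀ ℓ, (![C₁, C₂] ℓ).PosSemidef := Fin.forall_fin_two.mpr ⟨hC₁, hC₂⟩
  have hc : 0 ≤ ![c₁, c₂] := Fin.forall_fin_two.mpr ⟨hc₁.le, hc₂.le⟩
  obtain ⟨δ, ⟨hδ₀, hδ_le⟩, hfix⟩ := exists_fixedPoint_correctionMap hC hc hlam n.cast_nonneg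
  have hQ : correctedCovariance ![C₁, C₂] ![c₁, c₂] lam δ
      = (c₁ / (1 + δ 0)) • C₁ + (c₂ / (1 + δ 1)) • C₂ + lam • 1 := by
    simp [correctedCovariance, Fin.sum_univ_two]
  refine ⟨δ 0, δ 1, ⟨hδ₀ 0, hδ_le 0⟩, ⟨hδ₀ 1, hδ_le 1⟩, ?_, ?_, ?_⟩
  · exact hQ ▸ correctedCovariance_posDef hC hc hlam hδ₀
  · simpa [correctionMap, hQ] using (congrFun hfix 0).symm
  · simpa [correctionMap, hQ] using (congrFun hfix 1).symm

/-- Existence of the coupled deterministic-equivalent correction terms: there exist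
`0 ≤ δ_ℓ ≤ tr(C_ℓ)/(nλ)` with
`δ_ℓ = (1/n)·tr(C_ℓ·(c₁C₁/(1+δ₁) + c₂C₂/(1+δ₂) + λI)⁻¹)`, the inverted matrix being
positive definite. -/
theorem coupled_fixed_point_exists
    (d n : ℕ) (hd : 0 < d) (hn : 0 < n)
    (lam : ℝ) (hlam : 0 < lam)
    (C₁ C₂ : Matrix (Fin d) (Fin d) ℝ)
    (hC₁ : C₁.PosSemidef) (hC₂ : C₂.PosSemidef)
    (c₁ c₂ : ℝ) (hc₁ : 0 < c₁) (hc₂ : 0 < c₂) (hc : c₁ + c₂ = 1) :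
    ∃ δ₁ δ₂ : ℝ,
      (0 ≤ δ₁ ∧ δ₁ ≤ C₁.trace / (n * lam)) ∧
      (0 ≤ δ₂ ∧ δ₂ ≤ C₂.trace / (n * lam)) ∧
      ((c₁ / (1 + δ₁)) • C₁ + (c₂ / (1 + δ₂)) • C₂
        + lam • (1 : Matrix (Fin d) (Fin d) ℝ)).PosDef ∧
      δ₁ = (1 / (n : ℝ)) * (C₁ * ((c₁ / (1 + δ₁)) • C₁ + (c₂ / (1 + δ₂)) • C₂
        + lam • (1 : Matrix (Fin d) (Fin d) ℝ))⁻¹).trace ∧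
      δ₂ = (1 / (n : ℝ)) * (C₂ * ((c₁ / (1 + δ₁)) • C₁ + (c₂ / (1 + δ₂)) • C₂
        + lam • (1 : Matrix (Fin d) (Fin d) ℝ))⁻¹).trace :=
  coupled_fixed_point_exists_general d n lam hlam C₁ C₂ hC₁ hC₂ c₁ c₂ hc₁ hc₂
end
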